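/- Let Z_n := Σ_{b=0}^{2^n−1} m(b,n). Then for every n ≥ 1, Z_{n+1} = 2·Z_n + 2^n. -/

import Mathlib

/-!
Adding `2 ^ (k + j)` to `b` shifts the `k`-th Collatz iterate by `3 ^ m(b,k) * 2 ^ j`:
each step halves the shift, and multiplies it by `3` exactly when the current iterate is odd.
Hence the trajectories of `b` and `b + 2 ^ n` have the same parities for the first `n` steps
and opposite parities at step `n`, so `m(b, n+1) + m(b + 2^n, n+1) = 2 m(b, n) + 1`.
Summing over `b < 2 ^ n` gives the recursion.
-/

def T (N : ℕ) : ℕ := if N % 2 = 0 then N / 2 else (3 * N + 1) / 2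

def m (b n : ℕ) : ℕ := ((Finset.range n).filter (fun k => Odd (T^[k] b))).card

lemma m_succ (b n : ℕ) : m b (n + 1) = m b n + if Odd (T^[n] b) then 1 else 0 := by
  unfold m
  rw [Finset.range_add_one, Finset.filter_insert]
  split_ifs
  · exact Finset.card_insert_of_notMem (by simp)
  · rfl

lemma T_add_two_mul (a x : ℕ) : T (a + 2 * x) = T a + (if Odd a then 3 else 1) * x := by
  unfold T
  split_ifs <;> simp_all [Nat.odd_iff] <;> omega

lemma iterate_T_add_two_pow (b j k : ℕ) :
    T^[k] (b + 2 ^ (k + j)) = T^[k] b + 3 ^ m b k * 2 ^ j := by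
  induction k generalizing j with
  | zero => simp [m]
  | succ k ih =>
    have hshift : 3 ^ m b k * 2 ^ (j + 1) = 2 * (3 ^ m b k * 2 ^ j) := by ring
    rw [Function.iterate_succ_apply', Function.iterate_succ_apply', add_right_comm, add_assoc,
      ih, hshift, T_add_two_mul, m_succ]
    split_ifs <;> ring

lemma odd_iterate_T_add_two_pow_iff {b n k : ℕ} (hk : k < n) :
    Odd (T^[k] (b + 2 ^ n)) ↔ Odd (T^[k] b) := by
  obtain ⟨j, rfl⟩ := Nat.exists_eq_add_of_lt hk
  have heven : Even (3 ^ m b k * 2 ^ (j + 1)) :=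
    (Nat.even_pow.mpr ⟨even_two, j.succ_ne_zero⟩).mul_left _
  rw [add_assoc, iterate_T_add_two_pow, Nat.odd_add]
  exact iff_true_right heven

lemma m_add_two_pow (b n : ℕ) : m (b + 2 ^ n) n = m b n := by
  unfold m
  congr 1
  exact Finset.filter_congr fun k hk => odd_iterate_T_add_two_pow_iff (Finset.mem_range.mp hk)

lemma odd_iterate_T_add_two_pow_self_iff (b n : ℕ) :
    Odd (T^[n] (b + 2 ^ n)) ↔ ¬Odd (T^[n] b) := by
  have h3 : Odd (3 ^ m b n) := Odd.pow (by decide)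
  have h := iterate_T_add_two_pow b 0 n
  rw [add_zero, pow_zero, mul_one] at h
  rw [h, Nat.odd_add, ← Nat.not_odd_iff_even]
  tauto

lemma m_succ_add_m_succ_add_two_pow (b n : ℕ) :
    m b (n + 1) + m (b + 2 ^ n) (n + 1) = 2 * m b n + 1 := by
  rw [m_succ, m_succ, m_add_two_pow]
  simp only [odd_iterate_T_add_two_pow_self_iff]
  split_ifs <;> ring

theorem stmt11 : ∀ n ≥ 1,
    ∑ b ∈ Finset.range (2 ^ (n + 1)), m b (n + 1)
      = 2 * (∑ b ∈ Finset.range (2 ^ n), m b n) + 2 ^ n := by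
  intro n _
  calc ∑ b ∈ Finset.range (2 ^ (n + 1)), m b (n + 1)
      = ∑ b ∈ Finset.range (2 ^ n), (m b (n + 1) + m (b + 2 ^ n) (n + 1)) := by
        rw [pow_succ, mul_two, Finset.sum_range_add, ← Finset.sum_add_distrib]
        simp only [add_comm (2 ^ n)]
    _ = ∑ b ∈ Finset.range (2 ^ n), (2 * m b n + 1) :=
        Finset.sum_congr rfl fun b _ => m_succ_add_m_succ_add_two_pow b n
    _ = 2 * (∑ b ∈ Finset.range (2 ^ n), m b n) + 2 ^ n := by
        rw [Finset.sum_add_distrib, Finset.mul_sum, Finset.sum_const, Finset.card_range,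
          smul_eq_mul, mul_one]
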